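/- If P[s..L-1] occurs in T but P[s-1..L-1] does not occur in T (for some 1 ≤ s ≤ L-1), then no MEM of P with respect to T of length at least L starts at any position before s; hence all MEMs of length ≥ L are substrings of P[s..|P|-1]. -/

import Mathlib

open List

variable {α : Type*}

/-- `substr P i j` is the substring `P[i..j]` (inclusive indices). -/
def substr (P : List α) (i j : ℕ) : List α := (P.drop i).take (j - i + 1)

/-- `IsMEM T P i j` : `P[i..j]` is a maximal exact match of `P` w.r.t. `T`:
it occurs in `T`, and it can be extended neither to the left nor to the right
within `P` while still occurring in `T`. -/
def IsMEM (T P : List α) (i j : ℕ) : Prop :=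
  i ≤ j ∧ j < P.length ∧ substr P i j <:+: T ∧
  (i = 0 ∨ ¬ substr P (i - 1) j <:+: T) ∧
  (j = P.length - 1 ∨ ¬ substr P i (j + 1) <:+: T)

/-- All length-`k` substrings (`k`-mers) of `S` pass the filter `F`. -/
def kmersPass (F : List α → Bool) (k : ℕ) (S : List α) : Prop :=
  ∀ w : List α, w.length = k → w <:+: S → F w = true

/-- `IsPseudoMEM F k L P i j` : `P[i..j]` is a maximal substring of `P` of length
at least `L` all of whose `k`-mers pass the filter `F`. -/
def IsPseudoMEM (F : List α → Bool) (k L : ℕ) (P : List α) (i j : ℕ) : Prop :=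
  i ≤ j ∧ j < P.length ∧ L ≤ j - i + 1 ∧ kmersPass F k (substr P i j) ∧
  (i = 0 ∨ ¬ kmersPass F k (substr P (i - 1) j)) ∧
  (j = P.length - 1 ∨ ¬ kmersPass F k (substr P i (j + 1)))

/-- `F` has no false negatives for the `k`-mers of `T`. -/
def NoFalseNeg (F : List α → Bool) (k : ℕ) (T : List α) : Prop :=
  ∀ w : List α, w.length = k → w <:+: T → F w = true

-- `i' ≤ j'` is needed: for `i' > j'` truncated subtraction makes `substr P i' j'` the letter `P[i']`.
theorem substr_infix_substr (P : List α) {i j i' j' : ℕ} (hi : i ≤ i') (hj : j' ≤ j)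
    (hij' : i' ≤ j') : substr P i' j' <:+: substr P i j := by
  obtain ⟨d, rfl⟩ := Nat.exists_eq_add_of_le hi
  have hwindow : substr P (i + d) j' = ((substr P i j).drop d).take (j' - (i + d) + 1) := by
    unfold substr
    rw [List.drop_take, List.take_take, List.drop_drop]
    congr 1
    omega
  rw [hwindow]
  exact (List.take_prefix _ _).isInfix.trans (List.drop_suffix _ _).isInfix

theorem IsMEM.substr_infix {T P : List α} {i j i' j' : ℕ} (hmem : IsMEM T P i j)
    (hi : i ≤ i') (hj : j' ≤ j) (hij' : i' ≤ j') : substr P i' j' <:+: T :=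
  (substr_infix_substr P hi hj hij').trans hmem.2.2.1

theorem bml_skip_correct_general (T P : List α) (L s : ℕ)
    (hsL : s ≤ L - 1)
    (hnocc : ¬ substr P (s - 1) (L - 1) <:+: T) :
    ∀ i j, IsMEM T P i j → L ≤ j - i + 1 → s ≤ i := by
  intro i j hmem hlen
  by_contra! hi
  -- a MEM starting before `s` and ending at or after `L - 1` would contain `P[s-1..L-1]`
  exact hnocc (hmem.substr_infix (by omega) (by omega) (by omega))

/-- BML correctness: if `P[s..L-1]` occurs in `T` but
`P[s-1..L-1]` does not, then no MEM of length at least `L` starts before `s`;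
hence all such MEMs are substrings of `P[s..|P|-1]`. -/
theorem bml_skip_correct (T P : List α) (L s : ℕ)
    (hs : 1 ≤ s) (hsL : s ≤ L - 1) (hLP : L ≤ P.length)
    (hocc : substr P s (L - 1) <:+: T)
    (hnocc : ¬ substr P (s - 1) (L - 1) <:+: T) :
    ∀ i j, IsMEM T P i j → L ≤ j - i + 1 → s ≤ i :=
  bml_skip_correct_general T P L s hsL hnocc
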